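/- arXiv:2310.17600 — 2 statements merged into one kernel-verified Lean document; each statement's English description precedes it below -/
import Mathlib

section
/- Let (F_s)_{s=0}^T be a filtration and (Y_s)_{s=0}^T a sequence of random variables with Y_s F_s-measurable, Y_s ∈ (1/2)ℤ_{≥0}, Y₀ ≤ T/8, Y_{s+1} ≤ Y_s + 1, and such that P(Y_{s+1} ≤ Y_s − (1/2)·1_{Y_s>0} | F_s) ≥ 1 − q whenever Y_s ≥ ⌊(T−s)/16⌋. Then P(Y_T = 0) ≥ 1 − 4 q^{1/8}. -/
/-!
Call a step `s` a failure if `Y_s` is at or above its threshold `⌊(T - s)/16⌋` and yet the walk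
does not descend. Pathwise, if `Y_T ≠ 0` then some final window `[T - m, T)` contains at least
`m/8` failures: from the last time the walk started, sat at `0`, or had just been below its
threshold, every non-failing step descends by `1/2` while every step rises by at most `1`, and
the walk starts that window at height about `m/8` at most. Conditioning successively on `F_s`, all
times of a prescribed set `S` are failures with probability at most `q ^ #S`. A union bound over
`m` and over the at most `2^m` sets `S` with `m ≤ 8 #S` gives
`P(Y_T ≠ 0) ≤ ∑ₘ (2 q^{1/8})^m ≤ 4 q^{1/8}` when `q^{1/8} < 1/4`, and otherwise there is nothing
to prove.
-/

open MeasureTheory Finset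

def FailsDrift (T : ℕ) (y : ℕ → ℝ) (s : ℕ) : Prop :=
  (((T - s) / 16 : ℕ) : ℝ) ≤ y s ∧ ¬ y (s + 1) ≤ y s - (if 0 < y s then 1 / 2 else 0)

lemma le_add_card_filter_of_steps {y : ℕ → ℝ} (p : ℕ → Prop) [DecidablePred p] {a t : ℕ}
    (hat : a ≤ t) (hup : ∀ s ∈ Ico a t, y (s + 1) ≤ y s + 1)
    (hdown : ∀ s ∈ Ico a t, ¬ p s → y (s + 1) ≤ y s - 1 / 2) :
    y t ≤ y a + 3 / 2 * #{s ∈ Ico a t | p s} - ((t : ℝ) - a) / 2 := by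
  have hsum :
      y t - y a ≤ ∑ s ∈ Ico a t, ((3 / 2 : ℝ) * (if p s then 1 else 0) - 1 / 2) := by
    rw [← sum_Ico_sub y hat]
    refine sum_le_sum fun s hs => ?_
    by_cases hp : p s
    · simp only [hp, if_true]; linarith [hup s hs]
    · simp only [hp, if_false]; linarith [hdown s hs hp]
  rw [sum_sub_distrib, ← mul_sum, sum_boole, sum_const,
    Nat.card_Ico, nsmul_eq_mul, Nat.cast_sub hat] at hsum
  linarith

lemma descends_of_not_failsDrift {T s : ℕ} {y : ℕ → ℝ} (hpos : 0 < y (s + 1))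
    (habove : (((T - s) / 16 : ℕ) : ℝ) ≤ y s) (h : ¬ FailsDrift T y s) :
    y (s + 1) ≤ y s - 1 / 2 := by
  have hdesc := not_not.mp (not_and.mp h habove)
  split_ifs at hdesc with hys
  · exact hdesc
  · linarith [not_lt.mp hys]

open Classical in
lemma exists_window_failsDrift {T : ℕ} {y : ℕ → ℝ} (hy0 : ∀ s, 0 ≤ y s) (hyT : 1 / 2 ≤ y T)
    (hstart : y 0 ≤ T / 8) (hstep : ∀ s, y (s + 1) ≤ y s + 1) :
    ∃ m ∈ Icc 1 T, m ≤ 8 * #{s ∈ Ico (T - m) T | FailsDrift T y s} := by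
  -- `a` is the last time `≤ T` at which the walk started, sat at `0`, or had just been below
  -- its threshold; from then on every step that does not fail descends.
  set R : ℕ → Prop :=
    fun a => a = 0 ∨ y a = 0 ∨ ∃ t, a = t + 1 ∧ y t < ((T - t) / 16 : ℕ)
  set a := Nat.findGreatest R T
  have hRa : R a := Nat.findGreatest_spec (Nat.zero_le T) (Or.inl rfl)
  have hnR : ∀ s, a < s → s ≤ T → ¬ R s :=
    fun _ h1 h2 => Nat.findGreatest_is_greatest h1 h2
  have haT : a ≤ T := Nat.findGreatest_le T
  clear_value a
  have hbelow : ∀ t, y t < ((T - t) / 16 : ℕ) → 16 ≤ T - t := fun t hyt => by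
    by_contra! h
    rw [Nat.div_eq_of_lt h, Nat.cast_zero] at hyt
    linarith [hy0 t]
  have haT : a < T := by
    refine lt_of_le_of_ne haT fun haT => ?_
    subst haT
    rcases hRa with h | h | ⟨t, ht, hyt⟩
    · rw [h] at hyT hstart
      simp only [CharP.cast_eq_zero, zero_div] at hstart
      linarith
    · linarith
    · have := hbelow t hyt; omega
  have hdown : ∀ s ∈ Ico a T, ¬ FailsDrift T y s → y (s + 1) ≤ y s - 1 / 2 := by
    intro s hs hfail
    obtain ⟨has, hsT⟩ := mem_Ico.mp hs
    have hne : y (s + 1) ≠ 0 := fun h => hnR (s + 1) (by omega) hsT (Or.inr (Or.inl h))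
    have habove : (((T - s) / 16 : ℕ) : ℝ) ≤ y s :=
      not_lt.mp fun h => hnR (s + 1) (by omega) hsT (Or.inr (Or.inr ⟨s, rfl, h⟩))
    exact descends_of_not_failsDrift ((hy0 _).lt_of_ne' hne) habove hfail
  have hwalk := le_add_card_filter_of_steps (FailsDrift T y) haT.le (fun s _ => hstep s) hdown
  refine ⟨T - a, mem_Icc.mpr ⟨by omega, by omega⟩, ?_⟩
  rw [Nat.sub_sub_self haT.le]
  suffices (T : ℝ) - a ≤ 8 * #{s ∈ Ico a T | FailsDrift T y s} by
    rw [← Nat.cast_sub haT.le] at this; exact_mod_cast this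
  rcases hRa with h | h | ⟨t, rfl, hyt⟩
  · rw [h] at hwalk ⊢; push_cast at hwalk ⊢; linarith
  · linarith
  · have hk : ((((T - t) / 16 : ℕ)) : ℝ) ≤ ((T : ℝ) - t) / 16 := by
      rw [← Nat.cast_sub (by omega)]; exact Nat.cast_div_le
    have hwindow : (16 : ℝ) ≤ T - t := by
      rw [← Nat.cast_sub (by omega)]; exact_mod_cast hbelow t hyt
    have := hstep t
    push_cast at hwalk ⊢
    linarith

section

variable {Ω : Type*} {m0 : MeasurableSpace Ω} {μ : Measure Ω}

lemma mul_measureReal_le_measureReal_inter [IsFiniteMeasure μ] {m : MeasurableSpace Ω}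
    (hm : m ≤ m0) {B C : Set Ω} (hB : MeasurableSet[m] B) (hC : MeasurableSet[m0] C) {c : ℝ}
    (h : ∀ᵐ ω ∂μ, ω ∈ B → c ≤ μ[C.indicator (fun _ => (1 : ℝ)) | m] ω) :
    c * μ.real B ≤ μ.real (B ∩ C) := calc
  c * μ.real B = ∫ _ in B, c ∂μ := by rw [setIntegral_const, smul_eq_mul, mul_comm]
  _ ≤ ∫ ω in B, μ[C.indicator (fun _ => (1 : ℝ)) | m] ω ∂μ :=
    setIntegral_mono_ae_restrict (integrableOn_const (measure_ne_top μ B))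
      integrable_condExp.integrableOn ((ae_restrict_iff' (hm B hB)).mpr h)
  _ = ∫ ω in B, C.indicator (fun _ => (1 : ℝ)) ω ∂μ :=
    setIntegral_condExp hm ((integrable_const 1).indicator hC) hB
  _ = μ.real (B ∩ C) := by rw [setIntegral_indicator hC, setIntegral_const, smul_eq_mul, mul_one]

lemma measureReal_inter_inter_compl_le [IsFiniteMeasure μ] {m : MeasurableSpace Ω}
    (hm : m ≤ m0) {A B C : Set Ω} (hA : MeasurableSet[m] A) (hB : MeasurableSet[m] B)
    (hC : MeasurableSet[m0] C) {q : ℝ} (hq : 0 ≤ q)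
    (h : ∀ᵐ ω ∂μ, ω ∈ B → 1 - q ≤ μ[C.indicator (fun _ => (1 : ℝ)) | m] ω) :
    μ.real (A ∩ (B ∩ Cᶜ)) ≤ q * μ.real A := by
  have hAB := mul_measureReal_le_measureReal_inter hm (hA.inter hB) hC
    (h.mono fun ω hω hAB => hω hAB.2)
  have hsplit := measureReal_inter_add_sdiff (μ := μ) (s := A ∩ B) hC
  rw [Set.sdiff_eq] at hsplit
  rw [← Set.inter_assoc]
  have hmono : μ.real (A ∩ B) ≤ μ.real A := measureReal_mono Set.inter_subset_left
  linarith [mul_le_mul_of_nonneg_left hmono hq]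

lemma measureReal_biInter_le_pow [IsProbabilityMeasure μ] (F : Filtration ℕ m0)
    {E : ℕ → Set Ω} {q : ℝ} (hq : 0 ≤ q) (S : Finset ℕ)
    (hE : ∀ s ∈ S, MeasurableSet[F (s + 1)] (E s))
    (hstep : ∀ s ∈ S, ∀ A, MeasurableSet[F s] A → μ.real (A ∩ E s) ≤ q * μ.real A) :
    μ.real (⋂ s ∈ S, E s) ≤ q ^ #S := by
  induction S using Finset.induction_on_max with
  | empty => simp
  | insert a S hlt ih =>
    have hpast : MeasurableSet[F a] (⋂ s ∈ S, E s) :=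
      .biInter S.countable_toSet fun s hs =>
        F.mono (hlt s hs) _ (hE s (mem_insert_of_mem hs))
    rw [set_biInter_insert, Set.inter_comm, card_insert_of_notMem fun ha => (hlt a ha).false,
      pow_succ']
    calc μ.real ((⋂ s ∈ S, E s) ∩ E a) ≤ q * μ.real (⋂ s ∈ S, E s) :=
          hstep a (mem_insert_self a S) _ hpast
      _ ≤ q * q ^ #S := by
          gcongr
          exact ih (fun s hs => hE s (mem_insert_of_mem hs))
            fun s hs => hstep s (mem_insert_of_mem hs)

open Classical in
lemma measureReal_setOf_le_mul_card_le (E : ℕ → Set Ω) (I : Finset ℕ) (n k : ℕ) {r : ℝ}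
    [IsFiniteMeasure μ] (hr0 : 0 ≤ r) (hr1 : r ≤ 1)
    (h : ∀ S ⊆ I, μ.real (⋂ s ∈ S, E s) ≤ r ^ (n * #S)) :
    μ.real {ω | k ≤ n * #{s ∈ I | ω ∈ E s}} ≤ 2 ^ #I * r ^ k := by
  set W := I.powerset.filter fun S => k ≤ n * #S
  have hcover : {ω | k ≤ n * #{s ∈ I | ω ∈ E s}} ⊆ ⋃ S ∈ W, ⋂ s ∈ S, E s := fun ω hω =>
    Set.mem_biUnion (mem_filter.mpr ⟨mem_powerset.mpr (filter_subset _ I), hω⟩)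
      (Set.mem_iInter₂.mpr fun s hs => (mem_filter.mp hs).2)
  calc μ.real {ω | k ≤ n * #{s ∈ I | ω ∈ E s}} ≤ ∑ S ∈ W, μ.real (⋂ s ∈ S, E s) :=
        (measureReal_mono hcover (measure_ne_top μ _)).trans (measureReal_biUnion_finset_le W _)
    _ ≤ ∑ S ∈ W, r ^ k := sum_le_sum fun S hS => by
        obtain ⟨hSI, hkS⟩ := mem_filter.mp hS
        exact (h S (mem_powerset.mp hSI)).trans (pow_le_pow_of_le_one hr0 hr1 hkS)
    _ ≤ 2 ^ #I * r ^ k := by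
        rw [sum_const, nsmul_eq_mul]
        gcongr
        exact_mod_cast (card_filter_le _ _).trans (card_powerset I).le

lemma measurableSet_descends {m : MeasurableSpace Ω} {X X' : Ω → ℝ} (hX : Measurable[m] X)
    (hX' : Measurable[m] X') :
    MeasurableSet[m] {ω | X' ω ≤ X ω - if 0 < X ω then 1 / 2 else 0} :=
  measurableSet_le hX' <| hX.sub <|
    Measurable.ite (measurableSet_lt measurable_const hX) measurable_const measurable_const

variable {Y : ℕ → Ω → ℝ} {T : ℕ}

lemma measurableSet_failsDrift {m : MeasurableSpace Ω} {s : ℕ} (hs : Measurable[m] (Y s))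
    (hs' : Measurable[m] (Y (s + 1))) :
    MeasurableSet[m] {ω | FailsDrift T (fun n => Y n ω) s} :=
  (measurableSet_le measurable_const hs).inter (measurableSet_descends hs hs').compl

lemma measureReal_biInter_failsDrift_le [IsProbabilityMeasure μ] (F : Filtration ℕ m0)
    (hY : ∀ n, Measurable[F n] (Y n)) {q : ℝ} (hq : 0 ≤ q)
    (hdrift : ∀ s < T, ∀ᵐ ω ∂μ, ((((T - s) / 16 : ℕ) : ℝ) ≤ Y s ω) →
      1 - q ≤ μ[{ω' | Y (s + 1) ω' ≤ Y s ω' - (if 0 < Y s ω' then 1 / 2 else 0)}.indicator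
        (fun _ => (1 : ℝ)) | F s] ω)
    (S : Finset ℕ) (hS : ∀ s ∈ S, s < T) :
    μ.real (⋂ s ∈ S, {ω | FailsDrift T (fun n => Y n ω) s}) ≤ q ^ #S :=
  have hYm : ∀ n, Measurable (Y n) := fun n => (hY n).mono (F.le n) le_rfl
  measureReal_biInter_le_pow F hq S
    (fun s _ => measurableSet_failsDrift ((hY s).mono (F.mono s.le_succ) le_rfl) (hY (s + 1)))
    fun s hs _ hA => measureReal_inter_inter_compl_le (F.le s) hA
      (measurableSet_le measurable_const (hY s)) (measurableSet_descends (hYm s) (hYm (s + 1)))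
      hq (hdrift s (hS s hs))

end

lemma half_le_of_eq_natCast_div_two {x : ℝ} {k : ℕ} (hx : x = k / 2) (h0 : x ≠ 0) :
    1 / 2 ≤ x := by
  have hk : (1 : ℝ) ≤ k :=
    Nat.one_le_cast.mpr (Nat.one_le_iff_ne_zero.mpr fun hk => h0 (by simp [hx, hk]))
  linarith

lemma geom_sum_Icc_one_le_two_mul {x : ℝ} (hx0 : 0 ≤ x) (hx : x ≤ 1 / 2) (T : ℕ) :
    ∑ m ∈ Icc 1 T, x ^ m ≤ 2 * x := by
  rw [← Ico_add_one_right_eq_Icc]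
  refine geom_sum_Ico_le_of_lt_one hx0 (by linarith) |>.trans ?_
  rw [pow_one, div_le_iff₀ (by linarith)]
  nlinarith

theorem random_walk_hits_zero_general {Ω : Type*} {m0 : MeasurableSpace Ω}
    (μ : Measure Ω) [IsProbabilityMeasure μ]
    (F : Filtration ℕ m0) (T : ℕ) (Y : ℕ → Ω → ℝ)
    (hadapted : ∀ s, Measurable[F s] (Y s))
    (hhalf : ∀ s ω, ∃ k : ℕ, Y s ω = (k : ℝ) / 2)
    (hstart : ∀ ω, Y 0 ω ≤ (T : ℝ) / 8)
    (hstep : ∀ s ω, Y (s + 1) ω ≤ Y s ω + 1)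
    (q : ℝ) (hq0 : 0 ≤ q)
    (hdrift : ∀ s < T, ∀ᵐ ω ∂μ,
      ((((T - s) / 16 : ℕ) : ℝ) ≤ Y s ω) →
        1 - q ≤
          (μ[Set.indicator
              {ω' | Y (s + 1) ω' ≤ Y s ω' - (if 0 < Y s ω' then 1 / 2 else 0)}
              (fun _ => (1 : ℝ))|F s]) ω) :
    1 - 4 * q ^ ((1 : ℝ) / 8) ≤ (μ {ω | Y T ω = 0}).toReal := by
  classical
  set r := q ^ ((1 : ℝ) / 8)
  rcases le_or_gt (1 / 4) r with hr | hr
  · linarith [ENNReal.toReal_nonneg (a := μ {ω | Y T ω = 0})]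
  have hr0 : 0 ≤ r := Real.rpow_nonneg hq0 _
  have hqr : q = r ^ 8 := by rw [← Real.rpow_natCast, ← Real.rpow_mul hq0]; norm_num
  set E : ℕ → Set Ω := fun s => {ω | FailsDrift T (fun n => Y n ω) s}
  have hE : ∀ m, ∀ S ⊆ Ico (T - m) T, μ.real (⋂ s ∈ S, E s) ≤ r ^ (8 * #S) := fun m S hS => by
    rw [pow_mul, ← hqr]
    exact measureReal_biInter_failsDrift_le F hadapted hq0 hdrift S
      fun s hs => (mem_Ico.mp (hS hs)).2
  have hcover :
      {ω | Y T ω = 0}ᶜ ⊆ ⋃ m ∈ Icc 1 T, {ω | m ≤ 8 * #{s ∈ Ico (T - m) T | ω ∈ E s}} := by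
    intro ω hω
    obtain ⟨k, hk⟩ := hhalf T ω
    obtain ⟨m, hm, hfail⟩ := exists_window_failsDrift (y := fun n => Y n ω)
      (fun s => by obtain ⟨k, hk⟩ := hhalf s ω; rw [hk]; positivity)
      (half_le_of_eq_natCast_div_two hk hω) (hstart ω) (fun s => hstep s ω)
    exact Set.mem_biUnion hm hfail
  have hfail : μ.real {ω | Y T ω = 0}ᶜ ≤ 4 * r := calc
    _ ≤ ∑ m ∈ Icc 1 T, μ.real {ω | m ≤ 8 * #{s ∈ Ico (T - m) T | ω ∈ E s}} :=
      (measureReal_mono hcover (measure_ne_top μ _)).trans (measureReal_biUnion_finset_le _ _)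
    _ ≤ ∑ m ∈ Icc 1 T, (2 * r) ^ m := sum_le_sum fun m hm => by
      have := measureReal_setOf_le_mul_card_le (μ := μ) E _ 8 m hr0 (by linarith) (hE m)
      rwa [Nat.card_Ico, Nat.sub_sub_self (mem_Icc.mp hm).2, ← mul_pow] at this
    _ ≤ 4 * r := by
      linarith [geom_sum_Icc_one_le_two_mul (by positivity) (by linarith : 2 * r ≤ 1 / 2) T]
  rw [probReal_compl_eq_one_sub (measurableSet_eq_fun ((hadapted T).mono (F.le T) le_rfl)
    measurable_const)] at hfail
  change _ ≤ μ.real _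
  linarith

/-- Random walk lemma: let `(Y_s)_{s=0}^T` be adapted to a filtration `(F_s)`,
taking values in `(1/2)ℤ_{≥0}`, with `Y₀ ≤ T/8`, `Y_{s+1} ≤ Y_s + 1`, and
`P(Y_{s+1} ≤ Y_s − (1/2)·1_{Y_s>0} | F_s) ≥ 1 − q` whenever
`Y_s ≥ ⌊(T−s)/16⌋`.  Then `P(Y_T = 0) ≥ 1 − 4·q^{1/8}`. -/
theorem random_walk_hits_zero {Ω : Type*} {m0 : MeasurableSpace Ω}
    (μ : Measure Ω) [IsProbabilityMeasure μ]
    (F : Filtration ℕ m0) (T : ℕ) (Y : ℕ → Ω → ℝ)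
    (hadapted : ∀ s, Measurable[F s] (Y s))
    (hhalf : ∀ s ω, ∃ k : ℕ, Y s ω = (k : ℝ) / 2)
    (hstart : ∀ ω, Y 0 ω ≤ (T : ℝ) / 8)
    (hstep : ∀ s ω, Y (s + 1) ω ≤ Y s ω + 1)
    (q : ℝ) (hq0 : 0 ≤ q) (hq1 : q ≤ 1)
    (hdrift : ∀ s < T, ∀ᵐ ω ∂μ,
      ((((T - s) / 16 : ℕ) : ℝ) ≤ Y s ω) →
        1 - q ≤
          (μ[Set.indicator
              {ω' | Y (s + 1) ω' ≤ Y s ω' - (if 0 < Y s ω' then 1 / 2 else 0)}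
              (fun _ => (1 : ℝ))|F s]) ω) :
    1 - 4 * q ^ ((1 : ℝ) / 8) ≤ (μ {ω | Y T ω = 0}).toReal :=
  random_walk_hits_zero_general μ F T Y hadapted hhalf hstart hstep q hq0 hdrift
end

section
/- Let k₀ = k ≥ 1 and define kᵢ = k_{i−1} + g(k_{i−1}) where g(x) = ⌈ d·α(x)·x / (C′(d + log(n/x))) ⌉ with α(x) = (log(n/x))^{−2}, d ≥ 2, C′ > 0 a constant, and 1 ≤ k ≤ n. Let τ be the minimal index with k_τ > (n/(2d))·log log d. Then τ = O((log(n/k))⁴), with implied constant depending only on C′. -/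
set_option maxHeartbeats 1000000


/-- Iterating `k_{i} = k_{i-1} + g(k_{i-1})` with
`g(x) = ⌈d·α(x)·x / (C′(d + log(n/x)))⌉` and `α(x) = (log(n/x))⁻²`,
the minimal `τ` with `k_τ > (n/(2d))·log log d` satisfies
`τ = O((log(n/k))⁴)`, the implied constant depending only on `C′`. -/
theorem iteration_count_bound (C' : ℝ) (hC' : 0 < C') :
    ∃ K d₀ : ℝ, 0 < K ∧
      ∀ (n d k₀ : ℝ) (seq : ℕ → ℝ) (τ : ℕ),
        d₀ ≤ d → 1 ≤ k₀ → k₀ ≤ n →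
        seq 0 = k₀ →
        (∀ i : ℕ, seq (i + 1) = seq i +
          (⌈d * (Real.log (n / seq i))⁻¹ ^ 2 * seq i /
              (C' * (d + Real.log (n / seq i)))⌉₊ : ℝ)) →
        (n / (2 * d)) * Real.log (Real.log d) < seq τ →
        (∀ i < τ, seq i ≤ (n / (2 * d)) * Real.log (Real.log d)) →
        (τ : ℝ) ≤ K * Real.log (n / k₀) ^ 4 := by
  refine ⟨4 * C' + 5, 9, by linarith, ?_⟩
  intro n d k₀ seq τ hd hk₀ hkn h0 hrec hτ hmono
  set L := Real.log (n / k₀) with hLdef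
  have hn1 : (1:ℝ) ≤ n := le_trans hk₀ hkn
  have hn0 : (0:ℝ) < n := by linarith
  have hk0 : (0:ℝ) < k₀ := by linarith
  have hd1 : (1:ℝ) ≤ d := by linarith
  have hd0 : (0:ℝ) < d := by linarith
  have hL0 : 0 ≤ L := Real.log_nonneg (by rw [le_div_iff₀ hk0]; linarith)
  have he3 : Real.exp 1 < 3 := by
    have := Real.exp_one_lt_d9; linarith
  have he1 : (1:ℝ) ≤ Real.exp 1 := by
    have := Real.add_one_le_exp (1:ℝ); linarith
  -- threshold bound : T ≤ n / e
  have hsd : (3:ℝ) ≤ Real.sqrt d := by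
    rw [show (3:ℝ) = Real.sqrt 9 by
      rw [show (9:ℝ) = 3^2 by norm_num, Real.sqrt_sq (by norm_num : (0:ℝ) ≤ 3)]]
    exact Real.sqrt_le_sqrt hd
  have hsd2 : Real.sqrt d * Real.sqrt d = d := Real.mul_self_sqrt hd0.le
  have hlogd : Real.log d ≤ 2 * Real.sqrt d := by
    have h1 : Real.log d = 2 * Real.log (Real.sqrt d) := by
      rw [Real.log_sqrt hd0.le]; ring
    have h2 : Real.log (Real.sqrt d) ≤ Real.sqrt d - 1 :=
      Real.log_le_sub_one_of_pos (by linarith)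
    linarith
  have hlogd1 : 1 < Real.log d := by
    calc (1:ℝ) = Real.log (Real.exp 1) := (Real.log_exp 1).symm
      _ < Real.log d := Real.log_lt_log (Real.exp_pos 1) (by linarith)
  have hA0 : 0 ≤ Real.log (Real.log d) := Real.log_nonneg hlogd1.le
  have hA : Real.exp 1 * Real.log (Real.log d) ≤ 2 * d := by
    have h1 : Real.log (Real.log d) ≤ Real.log d :=
      le_trans (Real.log_le_sub_one_of_pos (by linarith)) (by linarith)
    have h2 : Real.exp 1 * Real.log (Real.log d) ≤ 3 * (2 * Real.sqrt d) := by
      nlinarith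
    nlinarith
  have hT : n / (2 * d) * Real.log (Real.log d) ≤ n / Real.exp 1 := by
    rw [div_mul_eq_mul_div, div_le_div_iff₀ (by positivity) (Real.exp_pos 1)]
    nlinarith
  have hTn : n / Real.exp 1 ≤ n := div_le_self hn0.le he1
  rcases lt_or_ge L 1 with hL1 | hL1
  · -- small L : τ = 0
    have hnk : n / k₀ < Real.exp 1 := by
      rw [← Real.exp_log (show (0:ℝ) < n / k₀ by positivity)]
      exact Real.exp_lt_exp.mpr hL1
    have hk₀T : n / Real.exp 1 < k₀ := by
      rw [div_lt_iff₀ (Real.exp_pos 1)]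
      calc n = n / k₀ * k₀ := by field_simp
        _ < Real.exp 1 * k₀ := by
            exact mul_lt_mul_of_pos_right hnk hk0
        _ = k₀ * Real.exp 1 := by ring
    have hτ0 : τ = 0 := by
      by_contra h
      have h1 : 0 < τ := Nat.pos_of_ne_zero h
      have := hmono 0 h1
      rw [h0] at this
      linarith
    rw [hτ0]
    simp only [Nat.cast_zero]
    have : (0:ℝ) ≤ L ^ 4 := by positivity
    nlinarith
  · -- large L
    have hLpos : (0:ℝ) < L := by linarith
    have hL3 : (1:ℝ) ≤ L ^ 3 := one_le_pow₀ hL1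
    set X : ℝ := (2 * C' + 2) * L ^ 3 with hXdef
    have hX0 : (0:ℝ) < X := by positivity
    have hX2 : (2:ℝ) ≤ X := by nlinarith
    set c : ℝ := 1 / X with hcdef
    have hc0 : 0 < c := by positivity
    have hc2 : c ≤ 1 / 2 := one_div_le_one_div_of_le (by norm_num) hX2
    have hcX : c * X = 1 := by rw [hcdef]; field_simp
    -- main induction
    have key : ∀ i, i ≤ τ → k₀ * (1 + c) ^ i ≤ seq i := by
      intro i
      induction i with
      | zero => intro _; rw [pow_zero, mul_one, h0]
      | succ i ih =>
        intro hiτ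
        have hi : i < τ := by omega
        have hle := hmono i hi
        have hx1 : k₀ * (1 + c) ^ i ≤ seq i := ih (le_of_lt hi)
        have hpow1 : (1:ℝ) ≤ (1 + c) ^ i := one_le_pow₀ (by linarith)
        have hxk : k₀ ≤ seq i := by nlinarith
        have hx0 : 0 < seq i := lt_of_lt_of_le hk0 hxk
        have hxn : seq i ≤ n / Real.exp 1 := le_trans hle hT
        set Li := Real.log (n / seq i) with hLi
        have hnx : Real.exp 1 ≤ n / seq i := by
          rw [le_div_iff₀ hx0]
          calc Real.exp 1 * seq i ≤ Real.exp 1 * (n / Real.exp 1) :=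
                mul_le_mul_of_nonneg_left hxn (Real.exp_pos 1).le
            _ = n := by field_simp
        have hLi1 : 1 ≤ Li := by
          rw [hLi]
          calc (1:ℝ) = Real.log (Real.exp 1) := (Real.log_exp 1).symm
            _ ≤ Real.log (n / seq i) := Real.log_le_log (Real.exp_pos 1) hnx
        have hLi0 : 0 < Li := by linarith
        have hLiL : Li ≤ L := by
          rw [hLi, hLdef]
          exact Real.log_le_log (by positivity) (by
            apply div_le_div_of_nonneg_left hn0.le hk0 hxk)
        have hden : 0 < C' * (d + Li) := mul_pos hC' (by linarith)
        have e1 : Li ^ 2 ≤ L ^ 2 := pow_le_pow_left₀ hLi0.le hLiL 2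
        have e2 : (d + Li) * Li ^ 2 ≤ (d + L) * L ^ 2 :=
          mul_le_mul (by linarith) e1 (by positivity) (by linarith)
        have e3a : d + L ≤ 2 * (d * L) := by nlinarith
        have e3 : (d + L) * L ^ 2 ≤ 2 * (d * L) * L ^ 2 :=
          mul_le_mul_of_nonneg_right e3a (sq_nonneg L)
        have h1 : C' * (d + Li) * Li ^ 2 ≤ d * X := by
          calc C' * (d + Li) * Li ^ 2 = C' * ((d + Li) * Li ^ 2) := by ring
            _ ≤ C' * ((d + L) * L ^ 2) := mul_le_mul_of_nonneg_left e2 hC'.le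
            _ ≤ C' * (2 * (d * L) * L ^ 2) := mul_le_mul_of_nonneg_left e3 hC'.le
            _ = 2 * C' * d * L ^ 3 := by ring
            _ ≤ d * X := by
                rw [hXdef]
                nlinarith [mul_pos hd0 (pow_pos hLpos 3)]
        have hstep : c * seq i ≤ d * Li⁻¹ ^ 2 * seq i / (C' * (d + Li)) := by
          rw [le_div_iff₀ hden]
          have hrw : d * Li⁻¹ ^ 2 * seq i = d * seq i / Li ^ 2 := by
            field_simp
          rw [hrw, le_div_iff₀ (pow_pos hLi0 2)]
          calc c * seq i * (C' * (d + Li)) * Li ^ 2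
              = (C' * (d + Li) * Li ^ 2) * c * seq i := by ring
            _ ≤ (d * X) * c * seq i := by
                apply mul_le_mul_of_nonneg_right _ hx0.le
                exact mul_le_mul_of_nonneg_right h1 hc0.le
            _ = d * (c * X) * seq i := by ring
            _ = d * seq i := by rw [hcX]; ring
        have hceil : d * Li⁻¹ ^ 2 * seq i / (C' * (d + Li)) ≤
            (⌈d * Li⁻¹ ^ 2 * seq i / (C' * (d + Li))⌉₊ : ℝ) := Nat.le_ceil _
        have hrec' := hrec i
        rw [← hLi] at hrec'
        have heq : (1 + c) * seq i = seq i + c * seq i := by ring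
        have : (1 + c) * seq i ≤ seq (i + 1) := by
          rw [hrec', heq]
          linarith
        calc k₀ * (1 + c) ^ (i + 1) = (1 + c) * (k₀ * (1 + c) ^ i) := by ring
          _ ≤ (1 + c) * seq i := mul_le_mul_of_nonneg_left hx1 (by linarith)
          _ ≤ seq (i + 1) := this
    -- conclude
    rcases Nat.eq_zero_or_pos τ with hτ0 | hτpos
    · rw [hτ0]
      simp only [Nat.cast_zero]
      have : (0:ℝ) ≤ L ^ 4 := by positivity
      nlinarith
    · obtain ⟨m, rfl⟩ := Nat.exists_eq_succ_of_ne_zero (Nat.pos_iff_ne_zero.mp hτpos)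
      have hm := key m (by omega)
      have hmn : seq m ≤ n := le_trans (hmono m (by omega)) (le_trans hT hTn)
      have hpow : (1 + c) ^ m ≤ n / k₀ := by
        rw [le_div_iff₀ hk0]
        nlinarith
      have hlogpow : (m : ℝ) * Real.log (1 + c) ≤ L := by
        rw [hLdef, ← Real.log_pow]
        exact Real.log_le_log (by positivity) hpow
      have hloglb : c / 2 ≤ Real.log (1 + c) := by
        have ha : 1 - c / 2 ≤ Real.exp (-(c / 2)) := by
          have := Real.add_one_le_exp (-(c / 2)); linarith
        have hb : Real.exp (c / 2) * (1 - c / 2) ≤ 1 := by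
          calc Real.exp (c / 2) * (1 - c / 2)
              ≤ Real.exp (c / 2) * Real.exp (-(c / 2)) :=
                mul_le_mul_of_nonneg_left ha (Real.exp_pos _).le
            _ = 1 := by rw [← Real.exp_add]; simp
        have hexp : Real.exp (c / 2) ≤ 1 + c := by nlinarith [Real.exp_pos (c / 2)]
        calc c / 2 = Real.log (Real.exp (c / 2)) := (Real.log_exp _).symm
          _ ≤ Real.log (1 + c) := Real.log_le_log (Real.exp_pos _) hexp
      have hmle : (m : ℝ) * (c / 2) ≤ L := by
        calc (m : ℝ) * (c / 2) ≤ (m : ℝ) * Real.log (1 + c) := by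
              apply mul_le_mul_of_nonneg_left hloglb (Nat.cast_nonneg m)
          _ ≤ L := hlogpow
      have hmbound : (m : ℝ) ≤ 2 * L * X := by
        have := hmle
        rw [hcdef] at this
        rw [div_div] at this
        rw [mul_one_div, div_le_iff₀ (by positivity : (0:ℝ) < X * 2)] at this
        linarith
      have hL4 : (1:ℝ) ≤ L ^ 4 := one_le_pow₀ hL1
      have hXL : 2 * L * X = (4 * C' + 4) * L ^ 4 := by
        rw [hXdef]; ring
      push_cast
      rw [hXL] at hmbound
      nlinarith
end
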